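/- arXiv:2203.05094 — 4 statements merged into one kernel-verified Lean document; each statement's English description precedes it below -/
import Mathlib

section
/- Let u₁, u₂ ∈ ℝⁿ, let y₁, y₂ ≥ 0 with y₁ + y₂ = 1, let ū = y₁u₁ + y₂u₂, let T₁, T₂ > 0 and ϑ ≥ 0. Define the velocity relaxation terms M₁ = ϑ(u₂ − u₁) and M₂ = ϑ(u₁ − u₂). Then the entropy production due to velocity relaxation satisfies (1/T₁)⟨ū − u₁, M₁⟩ + (1/T₂)⟨ū − u₂, M₂⟩ = ϑ(y₂/T₁ + y₁/T₂)‖u₁ − u₂‖² ≥ 0. -/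
open scoped RealInnerProductSpace

section ConvexCombination

variable {R M : Type*} [Ring R] [AddCommGroup M] [Module R M] {y₁ y₂ : R}

theorem smul_add_smul_sub_left (hy : y₁ + y₂ = 1) (a b : M) :
    y₁ • a + y₂ • b - a = y₂ • (b - a) := by
  rw [eq_sub_of_add_eq hy, sub_smul, one_smul, smul_sub]
  abel

theorem smul_add_smul_sub_right (hy : y₁ + y₂ = 1) (a b : M) :
    y₁ • a + y₂ • b - b = y₁ • (a - b) := by
  rw [add_comm (y₁ • a), smul_add_smul_sub_left ((add_comm y₂ y₁).trans hy)]

end ConvexCombination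

variable {E : Type*} [NormedAddCommGroup E] [InnerProductSpace ℝ E]

/-- Each phase sees the mean velocity displaced towards the other phase by the other phase's
mass fraction, so both terms are multiples of `‖u₁ - u₂‖²`. -/
theorem velocityRelaxation_entropyProduction_eq {y₁ y₂ : ℝ} (hy : y₁ + y₂ = 1) (u₁ u₂ : E)
    (T₁ T₂ ϑ : ℝ) :
    1 / T₁ * ⟪y₁ • u₁ + y₂ • u₂ - u₁, ϑ • (u₂ - u₁)⟫ +
        1 / T₂ * ⟪y₁ • u₁ + y₂ • u₂ - u₂, ϑ • (u₁ - u₂)⟫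
      = ϑ * (y₂ / T₁ + y₁ / T₂) * ‖u₁ - u₂‖ ^ 2 := by
  rw [smul_add_smul_sub_left hy, smul_add_smul_sub_right hy, real_inner_smul_left,
    real_inner_smul_left, real_inner_smul_right, real_inner_smul_right,
    real_inner_self_eq_norm_sq, real_inner_self_eq_norm_sq, norm_sub_rev u₂ u₁]
  ring

/-- Entropy production due to velocity relaxation is
`ϑ(y₂/T₁ + y₁/T₂)‖u₁ − u₂‖² ≥ 0`. -/
theorem velocity_relaxation_entropy_production {n : ℕ}
    (u₁ u₂ : EuclideanSpace ℝ (Fin n))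
    (y₁ y₂ : ℝ) (hy₁ : 0 ≤ y₁) (hy₂ : 0 ≤ y₂) (hy : y₁ + y₂ = 1)
    (ub : EuclideanSpace ℝ (Fin n)) (hub : ub = y₁ • u₁ + y₂ • u₂)
    (T₁ T₂ ϑ : ℝ) (hT₁ : 0 < T₁) (hT₂ : 0 < T₂) (hϑ : 0 ≤ ϑ)
    (M₁ M₂ : EuclideanSpace ℝ (Fin n))
    (hM₁ : M₁ = ϑ • (u₂ - u₁)) (hM₂ : M₂ = ϑ • (u₁ - u₂)) :
    (1 / T₁) * (inner ℝ (ub - u₁) M₁ : ℝ) + (1 / T₂) * (inner ℝ (ub - u₂) M₂ : ℝ)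
        = ϑ * (y₂ / T₁ + y₁ / T₂) * ‖u₁ - u₂‖ ^ 2
      ∧ 0 ≤ ϑ * (y₂ / T₁ + y₁ / T₂) * ‖u₁ - u₂‖ ^ 2 := by
  subst hub hM₁ hM₂
  exact ⟨velocityRelaxation_entropyProduction_eq hy u₁ u₂ T₁ T₂ ϑ, by positivity⟩
end

section
/- Let u₁, u₂, g ∈ ℝⁿ, let y₁, y₂ ≥ 0 with y₁ + y₂ = 1, let ū = y₁u₁ + y₂u₂, let T₁, T₂ > 0 and B ≥ 0. Define the interfacial viscous stress as the rank-one operator τ_I(v) = B⟨g, v⟩(u₁ − u₂) (i.e., τ_I = B(u₁ − u₂) ⊗ g, where g plays the role of ∇α₁), and set g₁ = g, g₂ = −g (the volume fraction gradients, with ∇α₂ = −∇α₁). Then the entropy production due to the interfacial stress satisfies (1/T₁)⟨u₁ − ū, τ_I(g₁)⟩ + (1/T₂)⟨u₂ − ū, τ_I(g₂)⟩ = B‖g‖²(y₂/T₁ + y₁/T₂)‖u₁ − u₂‖² ≥ 0. -/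
/-! Both relative velocities are multiples of the slip `u₁ − u₂`: `u₁ − ū = y₂ (u₁ − u₂)` and
`u₂ − ū = −y₁ (u₁ − u₂)`, while `τ_I(±g) = ±B‖g‖² (u₁ − u₂)`. Each term of the entropy production
is therefore a nonnegative multiple of `‖u₁ − u₂‖²`. -/

open RealInnerProductSpace

section Module

variable {R M : Type*} [CommRing R] [AddCommGroup M] [Module R M]

theorem sub_smul_add_smul_left {y₁ y₂ : R} (hy : y₁ + y₂ = 1) (u₁ u₂ : M) :
    u₁ - (y₁ • u₁ + y₂ • u₂) = y₂ • (u₁ - u₂) := by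
  rw [eq_sub_of_add_eq hy]
  module

theorem sub_smul_add_smul_right {y₁ y₂ : R} (hy : y₁ + y₂ = 1) (u₁ u₂ : M) :
    u₂ - (y₁ • u₁ + y₂ • u₂) = -y₁ • (u₁ - u₂) := by
  rw [eq_sub_of_add_eq' hy]
  module

end Module

section InnerProduct

variable {E : Type*} [NormedAddCommGroup E] [InnerProductSpace ℝ E]

theorem real_inner_smul_smul_self (a b : ℝ) (x : E) : ⟪a • x, b • x⟫ = a * b * ‖x‖ ^ 2 := by
  rw [real_inner_smul_left, real_inner_smul_right, real_inner_self_eq_norm_sq]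
  ring

theorem interfacial_entropy_production_eq {y₁ y₂ : ℝ} (hy : y₁ + y₂ = 1) (T₁ T₂ B : ℝ)
    (u₁ u₂ g : E) :
    1 / T₁ * ⟪u₁ - (y₁ • u₁ + y₂ • u₂), (B * ⟪g, g⟫) • (u₁ - u₂)⟫
        + 1 / T₂ * ⟪u₂ - (y₁ • u₁ + y₂ • u₂), (B * ⟪g, -g⟫) • (u₁ - u₂)⟫
      = B * ‖g‖ ^ 2 * (y₂ / T₁ + y₁ / T₂) * ‖u₁ - u₂‖ ^ 2 := by
  rw [sub_smul_add_smul_left hy, sub_smul_add_smul_right hy, inner_neg_right,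
    real_inner_self_eq_norm_sq, real_inner_smul_smul_self, real_inner_smul_smul_self]
  ring

end InnerProduct

/-- Entropy production due to the interfacial viscous stress
`τ_I = B(u₁ − u₂) ⊗ g` is `B‖g‖²(y₂/T₁ + y₁/T₂)‖u₁ − u₂‖² ≥ 0`. -/
theorem interfacial_stress_entropy_production {n : ℕ}
    (u₁ u₂ g : EuclideanSpace ℝ (Fin n))
    (y₁ y₂ : ℝ) (hy₁ : 0 ≤ y₁) (hy₂ : 0 ≤ y₂) (hy : y₁ + y₂ = 1)
    (ub : EuclideanSpace ℝ (Fin n)) (hub : ub = y₁ • u₁ + y₂ • u₂)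
    (T₁ T₂ B : ℝ) (hT₁ : 0 < T₁) (hT₂ : 0 < T₂) (hB : 0 ≤ B)
    (τI : EuclideanSpace ℝ (Fin n) → EuclideanSpace ℝ (Fin n))
    (hτI : ∀ v, τI v = (B * (inner ℝ g v : ℝ)) • (u₁ - u₂))
    (g₁ g₂ : EuclideanSpace ℝ (Fin n)) (hg₁ : g₁ = g) (hg₂ : g₂ = -g) :
    (1 / T₁) * (inner ℝ (u₁ - ub) (τI g₁) : ℝ)
        + (1 / T₂) * (inner ℝ (u₂ - ub) (τI g₂) : ℝ)
      = B * ‖g‖ ^ 2 * (y₂ / T₁ + y₁ / T₂) * ‖u₁ - u₂‖ ^ 2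
    ∧ 0 ≤ B * ‖g‖ ^ 2 * (y₂ / T₁ + y₁ / T₂) * ‖u₁ - u₂‖ ^ 2 := by
  rw [hub, hg₁, hg₂, hτI, hτI]
  exact ⟨interfacial_entropy_production_eq hy T₁ T₂ B u₁ u₂ g, by positivity⟩
end

section
/- Let p ∈ ℝ, let Γ₁, Γ₂ ∈ ℝ, A₁, A₂ > 0, α₁, α₂ > 0, and let q₁, q₂, Q₁, Q₂ ∈ ℝ with Q₁ + Q₂ = 0. Define a = α₁α₂[Γ₁(q₁ + Q₁)/α₁ − Γ₂(q₂ + Q₂)/α₂]/(A₁α₂ + A₂α₁) (the volume-fraction rate of phase 1, with that of phase 2 equal to −a), and set X₁ = q₁ + Q₁ − p·a and X₂ = q₂ + Q₂ − p·(−a). Then: (i) X₁ + X₂ = q₁ + q₂, and (ii) the pressure-equilibrium compatibility condition ((pΓ₁ − A₁)/α₁)·a + (Γ₁/α₁)X₁ = ((pΓ₂ − A₂)/α₂)·(−a) + (Γ₂/α₂)X₂ holds. -/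
/-- Heat-conduction step of the reduced model: conservation of mixture
internal energy and the differentiated pressure-equilibrium condition. -/
theorem heat_conduction_step_compatibility
    (p Γ₁ Γ₂ A₁ A₂ α₁ α₂ q₁ q₂ Q₁ Q₂ a X₁ X₂ : ℝ)
    (hA₁ : 0 < A₁) (hA₂ : 0 < A₂) (hα₁ : 0 < α₁) (hα₂ : 0 < α₂)
    (hQ : Q₁ + Q₂ = 0)
    (ha : a = α₁ * α₂ * (Γ₁ * (q₁ + Q₁) / α₁ - Γ₂ * (q₂ + Q₂) / α₂)
        / (A₁ * α₂ + A₂ * α₁))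
    (hX₁ : X₁ = q₁ + Q₁ - p * a) (hX₂ : X₂ = q₂ + Q₂ - p * (-a)) :
    X₁ + X₂ = q₁ + q₂
    ∧ ((p * Γ₁ - A₁) / α₁) * a + (Γ₁ / α₁) * X₁
        = ((p * Γ₂ - A₂) / α₂) * (-a) + (Γ₂ / α₂) * X₂ := by
  have hD : A₁ * α₂ + A₂ * α₁ ≠ 0 := by positivity
  constructor
  · rw [hX₁, hX₂]; linarith
  · subst hX₁ hX₂ ha
    field_simp
    ring
end

section
/- Let u₁, u₂, g ∈ ℝ³; let α₁, α₂ > 0 with α₁ + α₂ = 1; let ρ₁, ρ₂ > 0, ρ = α₁ρ₁ + α₂ρ₂, y_k = α_kρ_k/ρ, ū = y₁u₁ + y₂u₂; let T₁, T₂ > 0; let ϑ ≥ 0, ς ≥ 0, B ≥ 0; let D₁, D₂ be symmetric 3×3 real matrices and μ₁, μ₂, μ_{b,1}, μ_{b,2} ≥ 0. Define M₁ = ϑ(u₂ − u₁) = −M₂; Q₁ = ς(T₂ − T₁) = −Q₂; the interfacial stress τ_I(v) = B⟨g, v⟩(u₁ − u₂) with g₁ = g, g₂ = −g; and the Newtonian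 stresses τ_k = 2μ_kD_k + (μ_{b,k} − (2/3)μ_k)(tr D_k)I. Then the total pointwise entropy production of the relaxation and viscous terms is nonnegative: Σ_{k=1,2} (1/T_k)[⟨ū − u_k, M_k⟩ + ⟨u_k − ū, τ_I(g_k)⟩ + α_k(τ_k : D_k) + Q_k] ≥ 0. -/
/-!
Each term is nonnegative on its own. Relative to the mass-averaged velocity, phase `k` moves by
`±y_{k'} (u₁ - u₂)`, while drag and interfacial stress together push it by `∓(ϑ + B‖g‖²)(u₁ - u₂)`,
so its mechanical power is `(ϑ + B‖g‖²) y_{k'} ‖u₁ - u₂‖² ≥ 0`. The Newtonian dissipation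
`τ : D = 2μ‖D‖² + (μ_b - 2μ/3)(tr D)²` is nonnegative because `(tr D)² ≤ 3‖D‖²` by
Cauchy–Schwarz on the diagonal. Heat exchange contributes `ς (T₁ - T₂)² / (T₁ T₂) ≥ 0`.
-/

open Finset

section Viscous

variable {ι : Type*} [Fintype ι]

theorem Matrix.trace_sq_le_card_mul_sum_sq (D : Matrix ι ι ℝ) :
    D.trace ^ 2 ≤ Fintype.card ι * ∑ i, ∑ j, D i j ^ 2 := by
  have diag_le : ∑ i, D i i ^ 2 ≤ ∑ i, ∑ j, D i j ^ 2 :=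
    sum_le_sum fun i _ ↦ single_le_sum (f := fun j ↦ D i j ^ 2)
      (fun j _ ↦ sq_nonneg _) (mem_univ i)
  calc D.trace ^ 2 ≤ Fintype.card ι * ∑ i, D i i ^ 2 := sq_sum_le_card_mul_sum_sq
    _ ≤ Fintype.card ι * ∑ i, ∑ j, D i j ^ 2 := by gcongr

theorem newtonian_double_dot_eq [DecidableEq ι] (D : Matrix ι ι ℝ) (μ lam : ℝ) :
    ∑ i, ∑ j, ((2 * μ) • D + (lam * D.trace) • (1 : Matrix ι ι ℝ)) i j * D i j
      = 2 * μ * ∑ i, ∑ j, D i j ^ 2 + lam * D.trace ^ 2 := by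
  simp only [Matrix.add_apply, Matrix.smul_apply, Matrix.one_apply, smul_eq_mul, mul_ite,
    mul_one, mul_zero, add_mul, sum_add_distrib, ite_mul, zero_mul, sum_ite_eq, mem_univ,
    if_true]
  have htrace : ∑ i, lam * D.trace * D i i = lam * D.trace ^ 2 := by
    rw [← mul_sum, sq, ← mul_assoc]
    rfl
  rw [htrace, mul_sum]
  simp only [mul_sum, sq, mul_assoc]

theorem newtonian_double_dot_nonneg [DecidableEq ι] (D : Matrix ι ι ℝ) {μ μb : ℝ}
    (hμ : 0 ≤ μ) (hμb : 0 ≤ μb) :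
    0 ≤ ∑ i, ∑ j, ((2 * μ) • D
      + ((μb - 2 / Fintype.card ι * μ) * D.trace) • (1 : Matrix ι ι ℝ)) i j * D i j := by
  rw [newtonian_double_dot_eq]
  set S := ∑ i, ∑ j, D i j ^ 2
  have hS : 0 ≤ S := sum_nonneg fun i _ ↦ sum_nonneg fun j _ ↦ sq_nonneg _
  have hdev : 0 ≤ S - D.trace ^ 2 / Fintype.card ι :=
    sub_nonneg.2 <| div_le_of_le_mul₀ (Nat.cast_nonneg _) hS <|
      (D.trace_sq_le_card_mul_sum_sq).trans_eq (mul_comm _ _)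
  calc 0 ≤ 2 * μ * (S - D.trace ^ 2 / Fintype.card ι) + μb * D.trace ^ 2 := by positivity
    _ = 2 * μ * S + (μb - 2 / Fintype.card ι * μ) * D.trace ^ 2 := by ring

end Viscous

section Drag

variable {E : Type*} [NormedAddCommGroup E] [InnerProductSpace ℝ E]

theorem inner_weighted_mean_sub_fst {y₁ y₂ : ℝ} (hy : y₁ + y₂ = 1) (u₁ u₂ : E) (κ : ℝ) :
    inner ℝ (y₁ • u₁ + y₂ • u₂ - u₁) ((-κ) • (u₁ - u₂)) = κ * y₂ * ‖u₁ - u₂‖ ^ 2 := by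
  have hrel : y₁ • u₁ + y₂ • u₂ - u₁ = (-y₂) • (u₁ - u₂) := by
    rw [show y₁ = 1 - y₂ by linarith]; module
  rw [hrel, real_inner_smul_left, real_inner_smul_right, real_inner_self_eq_norm_sq]
  ring

theorem inner_weighted_mean_sub_snd {y₁ y₂ : ℝ} (hy : y₁ + y₂ = 1) (u₁ u₂ : E) (κ : ℝ) :
    inner ℝ (y₁ • u₁ + y₂ • u₂ - u₂) (κ • (u₁ - u₂)) = κ * y₁ * ‖u₁ - u₂‖ ^ 2 := by
  have hrel : y₁ • u₁ + y₂ • u₂ - u₂ = y₁ • (u₁ - u₂) := by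
    rw [show y₂ = 1 - y₁ by linarith]; module
  rw [hrel, real_inner_smul_left, real_inner_smul_right, real_inner_self_eq_norm_sq]
  ring

end Drag

theorem heat_exchange_entropy_nonneg {T₁ T₂ ς : ℝ} (hT₁ : 0 < T₁) (hT₂ : 0 < T₂) (hς : 0 ≤ ς) :
    0 ≤ 1 / T₁ * (ς * (T₂ - T₁)) + 1 / T₂ * (ς * (T₁ - T₂)) := by
  have h : 1 / T₁ * (ς * (T₂ - T₁)) + 1 / T₂ * (ς * (T₁ - T₂)) = ς * (T₁ - T₂) ^ 2 / (T₁ * T₂) := by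
    field_simp
    ring
  rw [h]
  positivity

theorem total_entropy_production_nonneg_general
    (u₁ u₂ g : EuclideanSpace ℝ (Fin 3))
    (α₁ α₂ ρ₁ ρ₂ ρ y₁ y₂ : ℝ)
    (hα₁ : 0 < α₁) (hα₂ : 0 < α₂)
    (hρ₁ : 0 < ρ₁) (hρ₂ : 0 < ρ₂)
    (hρdef : ρ = α₁ * ρ₁ + α₂ * ρ₂)
    (hy₁ : y₁ = α₁ * ρ₁ / ρ) (hy₂ : y₂ = α₂ * ρ₂ / ρ)
    (ub : EuclideanSpace ℝ (Fin 3)) (hub : ub = y₁ • u₁ + y₂ • u₂)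
    (T₁ T₂ ϑ ς B : ℝ) (hT₁ : 0 < T₁) (hT₂ : 0 < T₂)
    (hϑ : 0 ≤ ϑ) (hς : 0 ≤ ς) (hB : 0 ≤ B)
    (M₁ M₂ : EuclideanSpace ℝ (Fin 3))
    (hM₁ : M₁ = ϑ • (u₂ - u₁)) (hM₂ : M₂ = ϑ • (u₁ - u₂))
    (Q₁ Q₂ : ℝ) (hQ₁ : Q₁ = ς * (T₂ - T₁)) (hQ₂ : Q₂ = ς * (T₁ - T₂))
    (τI : EuclideanSpace ℝ (Fin 3) → EuclideanSpace ℝ (Fin 3))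
    (hτI : ∀ v, τI v = (B * (inner ℝ g v : ℝ)) • (u₁ - u₂))
    (g₁ g₂ : EuclideanSpace ℝ (Fin 3)) (hg₁ : g₁ = g) (hg₂ : g₂ = -g)
    (D₁ D₂ : Matrix (Fin 3) (Fin 3) ℝ)
    (μ₁ μ₂ μb₁ μb₂ : ℝ)
    (hμ₁ : 0 ≤ μ₁) (hμ₂ : 0 ≤ μ₂) (hμb₁ : 0 ≤ μb₁) (hμb₂ : 0 ≤ μb₂)
    (τ₁ τ₂ : Matrix (Fin 3) (Fin 3) ℝ)
    (hτ₁ : τ₁ = (2 * μ₁) • D₁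
        + ((μb₁ - (2 / 3) * μ₁) * D₁.trace) • (1 : Matrix (Fin 3) (Fin 3) ℝ))
    (hτ₂ : τ₂ = (2 * μ₂) • D₂
        + ((μb₂ - (2 / 3) * μ₂) * D₂.trace) • (1 : Matrix (Fin 3) (Fin 3) ℝ)) :
    0 ≤ (1 / T₁) * ((inner ℝ (ub - u₁) M₁ : ℝ) + (inner ℝ (u₁ - ub) (τI g₁) : ℝ)
            + α₁ * (∑ i, ∑ j, τ₁ i j * D₁ i j) + Q₁)
        + (1 / T₂) * ((inner ℝ (ub - u₂) M₂ : ℝ) + (inner ℝ (u₂ - ub) (τI g₂) : ℝ)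
            + α₂ * (∑ i, ∑ j, τ₂ i j * D₂ i j) + Q₂) := by
  have hρ : 0 < ρ := by rw [hρdef]; positivity
  have hy₁n : 0 ≤ y₁ := by rw [hy₁]; positivity
  have hy₂n : 0 ≤ y₂ := by rw [hy₂]; positivity
  have hy : y₁ + y₂ = 1 := by rw [hy₁, hy₂, ← add_div, ← hρdef, div_self hρ.ne']
  set κ := ϑ + B * ‖g‖ ^ 2
  have hκ : 0 ≤ κ := by positivity
  have drag₁ : inner ℝ (ub - u₁) M₁ + inner ℝ (u₁ - ub) (τI g₁) = κ * y₂ * ‖u₁ - u₂‖ ^ 2 := by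
    rw [← inner_weighted_mean_sub_fst hy, ← hub, ← neg_sub ub, inner_neg_left, ← sub_eq_add_neg,
      ← inner_sub_right, hM₁, hg₁, hτI, real_inner_self_eq_norm_sq]
    congr 1
    module
  have drag₂ : inner ℝ (ub - u₂) M₂ + inner ℝ (u₂ - ub) (τI g₂) = κ * y₁ * ‖u₁ - u₂‖ ^ 2 := by
    rw [← inner_weighted_mean_sub_snd hy, ← hub, ← neg_sub ub, inner_neg_left, ← sub_eq_add_neg,
      ← inner_sub_right, hM₂, hg₂, hτI, inner_neg_right, real_inner_self_eq_norm_sq]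
    congr 1
    module
  have visc₁ : 0 ≤ ∑ i, ∑ j, τ₁ i j * D₁ i j := by
    simpa only [hτ₁, Fintype.card_fin, Nat.cast_ofNat] using newtonian_double_dot_nonneg D₁ hμ₁ hμb₁
  have visc₂ : 0 ≤ ∑ i, ∑ j, τ₂ i j * D₂ i j := by
    simpa only [hτ₂, Fintype.card_fin, Nat.cast_ofNat] using newtonian_double_dot_nonneg D₂ hμ₂ hμb₂
  have mech₁ : 0 ≤ 1 / T₁ * (κ * y₂ * ‖u₁ - u₂‖ ^ 2 + α₁ * ∑ i, ∑ j, τ₁ i j * D₁ i j) := by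
    have := mul_nonneg hα₁.le visc₁
    positivity
  have mech₂ : 0 ≤ 1 / T₂ * (κ * y₁ * ‖u₁ - u₂‖ ^ 2 + α₂ * ∑ i, ∑ j, τ₂ i j * D₂ i j) := by
    have := mul_nonneg hα₂.le visc₂
    positivity
  rw [drag₁, drag₂, hQ₁, hQ₂]
  linarith [heat_exchange_entropy_nonneg hT₁ hT₂ hς]

/-- Total pointwise entropy production of the relaxation, interfacial-stress
and Newtonian viscous terms of the two-phase model is nonnegative. -/
theorem total_entropy_production_nonneg
    (u₁ u₂ g : EuclideanSpace ℝ (Fin 3))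
    (α₁ α₂ ρ₁ ρ₂ ρ y₁ y₂ : ℝ)
    (hα₁ : 0 < α₁) (hα₂ : 0 < α₂) (hsat : α₁ + α₂ = 1)
    (hρ₁ : 0 < ρ₁) (hρ₂ : 0 < ρ₂)
    (hρdef : ρ = α₁ * ρ₁ + α₂ * ρ₂)
    (hy₁ : y₁ = α₁ * ρ₁ / ρ) (hy₂ : y₂ = α₂ * ρ₂ / ρ)
    (ub : EuclideanSpace ℝ (Fin 3)) (hub : ub = y₁ • u₁ + y₂ • u₂)
    (T₁ T₂ ϑ ς B : ℝ) (hT₁ : 0 < T₁) (hT₂ : 0 < T₂)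
    (hϑ : 0 ≤ ϑ) (hς : 0 ≤ ς) (hB : 0 ≤ B)
    (M₁ M₂ : EuclideanSpace ℝ (Fin 3))
    (hM₁ : M₁ = ϑ • (u₂ - u₁)) (hM₂ : M₂ = ϑ • (u₁ - u₂))
    (Q₁ Q₂ : ℝ) (hQ₁ : Q₁ = ς * (T₂ - T₁)) (hQ₂ : Q₂ = ς * (T₁ - T₂))
    (τI : EuclideanSpace ℝ (Fin 3) → EuclideanSpace ℝ (Fin 3))
    (hτI : ∀ v, τI v = (B * (inner ℝ g v : ℝ)) • (u₁ - u₂))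
    (g₁ g₂ : EuclideanSpace ℝ (Fin 3)) (hg₁ : g₁ = g) (hg₂ : g₂ = -g)
    (D₁ D₂ : Matrix (Fin 3) (Fin 3) ℝ) (hD₁ : D₁.IsSymm) (hD₂ : D₂.IsSymm)
    (μ₁ μ₂ μb₁ μb₂ : ℝ)
    (hμ₁ : 0 ≤ μ₁) (hμ₂ : 0 ≤ μ₂) (hμb₁ : 0 ≤ μb₁) (hμb₂ : 0 ≤ μb₂)
    (τ₁ τ₂ : Matrix (Fin 3) (Fin 3) ℝ)
    (hτ₁ : τ₁ = (2 * μ₁) • D₁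
        + ((μb₁ - (2 / 3) * μ₁) * D₁.trace) • (1 : Matrix (Fin 3) (Fin 3) ℝ))
    (hτ₂ : τ₂ = (2 * μ₂) • D₂
        + ((μb₂ - (2 / 3) * μ₂) * D₂.trace) • (1 : Matrix (Fin 3) (Fin 3) ℝ)) :
    0 ≤ (1 / T₁) * ((inner ℝ (ub - u₁) M₁ : ℝ) + (inner ℝ (u₁ - ub) (τI g₁) : ℝ)
            + α₁ * (∑ i, ∑ j, τ₁ i j * D₁ i j) + Q₁)
        + (1 / T₂) * ((inner ℝ (ub - u₂) M₂ : ℝ) + (inner ℝ (u₂ - ub) (τI g₂) : ℝ)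
            + α₂ * (∑ i, ∑ j, τ₂ i j * D₂ i j) + Q₂) :=
  total_entropy_production_nonneg_general u₁ u₂ g α₁ α₂ ρ₁ ρ₂ ρ y₁ y₂ hα₁ hα₂ hρ₁ hρ₂ hρdef hy₁ hy₂
    ub hub T₁ T₂ ϑ ς B hT₁ hT₂ hϑ hς hB M₁ M₂ hM₁ hM₂ Q₁ Q₂ hQ₁ hQ₂ τI hτI g₁ g₂ hg₁ hg₂ D₁ D₂ μ₁ μ₂
    μb₁ μb₂ hμ₁ hμ₂ hμb₁ hμb₂ τ₁ τ₂ hτ₁ hτ₂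
end
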